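/- arXiv:2002.10999 — 2 statements merged into one kernel-verified Lean document; each statement's English description precedes it below -/
import Mathlib

section
/- Let w₁, …, wₙ be strictly positive reals with Σᵢ wᵢ = 1, and let (m₁, s₁), …, (mₙ, sₙ) be pairs of reals with sᵢ > 0 for all i. Suppose there exist indices i ≠ j such that mᵢ·sⱼ ≠ mⱼ·sᵢ (i.e., the moment pairs do not all lie on a single line through the origin). Let m = Σᵢ wᵢ mᵢ and s = Σᵢ wᵢ sᵢ. Then the inequality is strict: Σᵢ wᵢ·(1 − mᵢ²/sᵢ) < 1 − m²/s. -/
/-! The map `(x, y) ↦ x ^ 2 / y` is convex on `y > 0` and lies above each of its tangent planes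
`2 l x - l ^ 2 y` with a gap of exactly `(x - l y) ^ 2 / y`, which vanishes only on the ray
`x = l y`. Summing the tangent inequality at the slope `l = m / s` of the mixture gives
`m ^ 2 / s ≤ ∑ wᵢ mᵢ ^ 2 / sᵢ`, strictly as soon as one component leaves that ray, which
non-proportional moment pairs force. -/

open Finset

theorem sq_div_sub_tangent (l x : ℝ) {y : ℝ} (hy : y ≠ 0) :
    x ^ 2 / y - (2 * l * x - l ^ 2 * y) = (x - l * y) ^ 2 / y := by
  field_simp
  ring

theorem tangent_le_sq_div (l x : ℝ) {y : ℝ} (hy : 0 < y) :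
    2 * l * x - l ^ 2 * y ≤ x ^ 2 / y := by
  have := sq_div_sub_tangent l x hy.ne'
  have : 0 ≤ (x - l * y) ^ 2 / y := by positivity
  linarith

theorem tangent_lt_sq_div {l x y : ℝ} (hy : 0 < y) (hx : x ≠ l * y) :
    2 * l * x - l ^ 2 * y < x ^ 2 / y := by
  have := sq_div_sub_tangent l x hy.ne'
  have : 0 < (x - l * y) ^ 2 / y := div_pos ((sq_pos_of_ne_zero (sub_ne_zero.mpr hx))) hy
  linarith

section

variable {ι : Type*} {t : Finset ι} {w m s : ι → ℝ}

theorem exists_ne_mul_of_mul_ne_mul (h : ∃ i ∈ t, ∃ j ∈ t, m i * s j ≠ m j * s i) (l : ℝ) :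
    ∃ k ∈ t, m k ≠ l * s k := by
  by_contra! hprop
  obtain ⟨i, hi, j, hj, hij⟩ := h
  rw [hprop i hi, hprop j hj] at hij
  exact hij (by ring)

theorem sum_tangent_eq (w m s : ι → ℝ) (t : Finset ι) (l : ℝ) :
    ∑ i ∈ t, w i * (2 * l * m i - l ^ 2 * s i) =
      2 * l * ∑ i ∈ t, w i * m i - l ^ 2 * ∑ i ∈ t, w i * s i := by
  rw [mul_sum, mul_sum, ← sum_sub_distrib]
  exact sum_congr rfl fun i _ => by ring

theorem sq_sum_div_sum_lt_sum_sq_div (hw : ∀ i ∈ t, 0 < w i) (hs : ∀ i ∈ t, 0 < s i)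
    (h : ∃ i ∈ t, ∃ j ∈ t, m i * s j ≠ m j * s i) :
    (∑ i ∈ t, w i * m i) ^ 2 / ∑ i ∈ t, w i * s i < ∑ i ∈ t, w i * (m i ^ 2 / s i) := by
  obtain ⟨i₀, hi₀, -⟩ := id h
  set M := ∑ i ∈ t, w i * m i
  set S := ∑ i ∈ t, w i * s i
  have hS : 0 < S := sum_pos (fun i hi => mul_pos (hw i hi) (hs i hi)) ⟨i₀, hi₀⟩
  obtain ⟨k, hk, hmk⟩ := exists_ne_mul_of_mul_ne_mul h (M / S)
  calc M ^ 2 / S = ∑ i ∈ t, w i * (2 * (M / S) * m i - (M / S) ^ 2 * s i) := by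
        rw [sum_tangent_eq]
        field_simp
        ring
    _ < ∑ i ∈ t, w i * (m i ^ 2 / s i) :=
        sum_lt_sum (fun i hi => mul_le_mul_of_nonneg_left
            (tangent_le_sq_div _ _ (hs i hi)) (hw i hi).le)
          ⟨k, hk, mul_lt_mul_of_pos_left (tangent_lt_sq_div (hs k hk) hmk) (hw k hk)⟩

end

/-- Strict part of Theorem 1 (real-analytic form): if the moment pairs do not all lie
on a single line through the origin, the weighted sum of the component Cantelli bounds
is strictly smaller than the mixture Cantelli bound. -/
theorem weighted_cantelli_lt_mixture_cantelli
    (n : ℕ) (w : Fin n → ℝ) (hw : ∀ i, 0 < w i) (hsum : ∑ i, w i = 1)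
    (m s : Fin n → ℝ) (hs : ∀ i, 0 < s i)
    (hne : ∃ i j, i ≠ j ∧ m i * s j ≠ m j * s i) :
    ∑ i, w i * (1 - (m i) ^ 2 / s i) <
      1 - (∑ i, w i * m i) ^ 2 / (∑ i, w i * s i) := by
  obtain ⟨i, j, -, hij⟩ := hne
  have hjensen := sq_sum_div_sum_lt_sum_sq_div (fun i _ => hw i) (fun i _ => hs i)
    ⟨i, mem_univ i, j, mem_univ j, hij⟩
  rw [show ∑ i, w i * (1 - m i ^ 2 / s i) = 1 - ∑ i, w i * (m i ^ 2 / s i) by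
    simp only [mul_one_sub, sum_sub_distrib, hsum]]
  linarith
end

section
/- Let μ₁, …, μₙ be probability measures on ℝ^d, let w₁, …, wₙ be strictly positive reals with Σᵢ wᵢ = 1, and let μ = Σᵢ wᵢ μᵢ. Let g : ℝ^d → ℝ be measurable and square-integrable with respect to μ. Denote mᵢ = E_{μᵢ}[g], sᵢ = E_{μᵢ}[g²], σᵢ² = sᵢ − mᵢ², m = E_μ[g], s = E_μ[g²], σ² = s − m². Assume sᵢ > 0 for all i and that there exist indices i ≠ j with mᵢ·sⱼ ≠ mⱼ·sᵢ. Then Σᵢ wᵢ · σᵢ²/(σᵢ² + mᵢ²) < σ²/(σ² + m²); i.e., the weighted sum of the component Cantelli bounds is strictly smaller than the Cantelli bound of the mixture. -/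
/-!
The Cantelli bound of a variable with mean `m` and second moment `s > 0` is `1 - m² / s`, and the
moments of a mixture are the weighted moments of its components. The claim thus reduces to
`(∑ wᵢ mᵢ)² / ∑ wᵢ sᵢ < ∑ wᵢ mᵢ² / sᵢ`, which is the strict form of Sedrakyan's inequality
`(∑ fᵢ)² / ∑ gᵢ ≤ ∑ fᵢ² / gᵢ` for `fᵢ = wᵢ mᵢ`, `gᵢ = wᵢ sᵢ`: equality forces `f` to be
proportional to `g`, i.e. all `mᵢ / sᵢ` to agree.
-/

open MeasureTheory Finset

namespace Finset

variable {ι R : Type*} [Field R] [LinearOrder R] [IsStrictOrderedRing R]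

theorem sq_sum_div_lt_sum_sq_div (s : Finset ι) {f g : ι → R} (hg : ∀ i ∈ s, 0 < g i)
    (hfg : ∃ i ∈ s, ∃ j ∈ s, f i * g j ≠ f j * g i) :
    (∑ i ∈ s, f i) ^ 2 / ∑ i ∈ s, g i < ∑ i ∈ s, f i ^ 2 / g i := by
  obtain ⟨i, hi, j, hj, hij⟩ := hfg
  set F := ∑ i ∈ s, f i
  set G := ∑ i ∈ s, g i
  have hG : 0 < G := sum_pos hg ⟨i, hi⟩
  set t := F / G
  have hgap : ∑ k ∈ s, (f k - t * g k) ^ 2 / g k = ∑ k ∈ s, f k ^ 2 / g k - F ^ 2 / G := by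
    have hexpand : ∀ k ∈ s, (f k - t * g k) ^ 2 / g k = f k ^ 2 / g k - 2 * t * f k + t ^ 2 * g k :=
      fun k hk => by field_simp [(hg k hk).ne']; ring
    rw [sum_congr rfl hexpand, sum_add_distrib, sum_sub_distrib, ← mul_sum, ← mul_sum,
      show t = F / G from rfl]
    field_simp
    ring
  have hoff : ∃ k ∈ s, f k - t * g k ≠ 0 := by
    by_contra! h
    rw [sub_eq_zero.mp (h i hi), sub_eq_zero.mp (h j hj)] at hij
    exact hij (by ring)
  obtain ⟨k, hk, hk0⟩ := hoff
  have hpos : 0 < ∑ k ∈ s, (f k - t * g k) ^ 2 / g k :=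
    sum_pos' (fun l hl => div_nonneg (sq_nonneg _) (hg l hl).le)
      ⟨k, hk, div_pos (by positivity) (hg k hk)⟩
  linarith

end Finset

/-- Cantelli's bound `σ² / (σ² + m²)` in terms of the mean `m` and the second moment `s`. -/
noncomputable def cantelliBound (m s : ℝ) : ℝ := (s - m ^ 2) / ((s - m ^ 2) + m ^ 2)

theorem cantelliBound_eq {m s : ℝ} (hs : s ≠ 0) : cantelliBound m s = 1 - m ^ 2 / s := by
  rw [cantelliBound, sub_add_cancel, sub_div, div_self hs]

theorem sum_mul_cantelliBound_lt {ι : Type*} (S : Finset ι) {w m s : ι → ℝ}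
    (hw : ∀ i ∈ S, 0 < w i) (hw1 : ∑ i ∈ S, w i = 1) (hs : ∀ i ∈ S, 0 < s i)
    (hms : ∃ i ∈ S, ∃ j ∈ S, m i * s j ≠ m j * s i) :
    ∑ i ∈ S, w i * cantelliBound (m i) (s i) <
      cantelliBound (∑ i ∈ S, w i * m i) (∑ i ∈ S, w i * s i) := by
  have hws : ∀ i ∈ S, 0 < w i * s i := fun i hi => mul_pos (hw i hi) (hs i hi)
  have hcomp : ∀ i ∈ S, w i * cantelliBound (m i) (s i) = w i - (w i * m i) ^ 2 / (w i * s i) :=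
    fun i hi => by
      rw [cantelliBound_eq (hs i hi).ne']
      field_simp [(hw i hi).ne', (hs i hi).ne']
  obtain ⟨i, hi, j, hj, hij⟩ := hms
  rw [sum_congr rfl hcomp, sum_sub_distrib, hw1, cantelliBound_eq (sum_pos hws ⟨i, hi⟩).ne']
  have hwij : w i * w j ≠ 0 := (mul_pos (hw i hi) (hw j hj)).ne'
  have hwms : (w i * m i) * (w j * s j) ≠ (w j * m j) * (w i * s i) := fun h =>
    hij <| mul_left_cancel₀ hwij (by linear_combination h)
  have hsedrakyan := sq_sum_div_lt_sum_sq_div S (f := fun i => w i * m i) hws ⟨i, hi, j, hj, hwms⟩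
  linarith

namespace MeasureTheory

variable {α : Type*} [MeasurableSpace α]

theorem MemLp.of_smul_measure_le {E : Type*} [NormedAddCommGroup E] {p : ENNReal}
    {μ ν : Measure α} {c : ENNReal} (hc0 : c ≠ 0) (hc : c ≠ ⊤) (hle : c • ν ≤ μ) {f : α → E}
    (hf : MemLp f p μ) : MemLp f p ν := by
  have h := (hf.mono_measure hle).smul_measure (ENNReal.inv_ne_top.mpr hc0)
  rwa [smul_smul, ENNReal.inv_mul_cancel hc0 hc, one_smul] at h

theorem integral_finsetSum_ofReal_smul_measure {ι E : Type*} [NormedAddCommGroup E]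
    [NormedSpace ℝ E] (S : Finset ι) {μ : ι → Measure α} {w : ι → ℝ} (hw : ∀ i ∈ S, 0 ≤ w i)
    {f : α → E} (hf : ∀ i ∈ S, Integrable f (μ i)) :
    ∫ x, f x ∂(∑ i ∈ S, ENNReal.ofReal (w i) • μ i) = ∑ i ∈ S, w i • ∫ x, f x ∂(μ i) := by
  rw [integral_finsetSum_measure fun i hi => (hf i hi).smul_measure ENNReal.ofReal_ne_top]
  refine sum_congr rfl fun i hi => ?_
  rw [integral_smul_measure, ENNReal.toReal_ofReal (hw i hi)]

end MeasureTheory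

theorem mixture_cantelli_strict_general
    (d n : ℕ)
    (μs : Fin n → Measure (Fin d → ℝ)) (hprob : ∀ i, IsProbabilityMeasure (μs i))
    (w : Fin n → ℝ) (hw : ∀ i, 0 < w i) (hsum : ∑ i, w i = 1)
    (μ : Measure (Fin d → ℝ)) (hμ : μ = ∑ i, ENNReal.ofReal (w i) • μs i)
    (g : (Fin d → ℝ) → ℝ) (hg2 : MemLp g 2 μ)
    (hs : ∀ i, 0 < ∫ x, (g x) ^ 2 ∂(μs i))
    (hne : ∃ i j, i ≠ j ∧
      (∫ x, g x ∂(μs i)) * (∫ x, (g x) ^ 2 ∂(μs j)) ≠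
        (∫ x, g x ∂(μs j)) * (∫ x, (g x) ^ 2 ∂(μs i))) :
    ∑ i, w i *
        ((∫ x, (g x) ^ 2 ∂(μs i) - (∫ x, g x ∂(μs i)) ^ 2) /
          ((∫ x, (g x) ^ 2 ∂(μs i) - (∫ x, g x ∂(μs i)) ^ 2) + (∫ x, g x ∂(μs i)) ^ 2)) <
      (∫ x, (g x) ^ 2 ∂μ - (∫ x, g x ∂μ) ^ 2) /
        ((∫ x, (g x) ^ 2 ∂μ - (∫ x, g x ∂μ) ^ 2) + (∫ x, g x ∂μ) ^ 2) := by
  have hmem : ∀ i, MemLp g 2 (μs i) := fun i =>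
    hg2.of_smul_measure_le (ENNReal.ofReal_pos.mpr (hw i)).ne' ENNReal.ofReal_ne_top
      (hμ ▸ single_le_sum (fun _ _ => Measure.zero_le _) (mem_univ i))
  have hmean : ∫ x, g x ∂μ = ∑ i, w i * ∫ x, g x ∂(μs i) :=
    hμ ▸ integral_finsetSum_ofReal_smul_measure _ (fun i _ => (hw i).le)
      fun i _ => (hmem i).integrable one_le_two
  have hsecond : ∫ x, (g x) ^ 2 ∂μ = ∑ i, w i * ∫ x, (g x) ^ 2 ∂(μs i) :=
    hμ ▸ integral_finsetSum_ofReal_smul_measure _ (fun i _ => (hw i).le)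
      fun i _ => (hmem i).integrable_sq
  obtain ⟨i, j, -, hij⟩ := hne
  rw [hmean, hsecond]
  exact sum_mul_cantelliBound_lt univ (fun i _ => hw i) hsum (fun i _ => hs i)
    ⟨i, mem_univ i, j, mem_univ j, hij⟩

/-- Probabilistic form of the strict part of Theorem 1: componentwise Cantelli bounds
are strictly less conservative than the Cantelli bound of the mixture. -/
theorem mixture_cantelli_strict
    (d n : ℕ)
    (μs : Fin n → Measure (Fin d → ℝ)) (hprob : ∀ i, IsProbabilityMeasure (μs i))
    (w : Fin n → ℝ) (hw : ∀ i, 0 < w i) (hsum : ∑ i, w i = 1)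
    (μ : Measure (Fin d → ℝ)) (hμ : μ = ∑ i, ENNReal.ofReal (w i) • μs i)
    (g : (Fin d → ℝ) → ℝ) (hg : Measurable g) (hg2 : MemLp g 2 μ)
    (hs : ∀ i, 0 < ∫ x, (g x) ^ 2 ∂(μs i))
    (hne : ∃ i j, i ≠ j ∧
      (∫ x, g x ∂(μs i)) * (∫ x, (g x) ^ 2 ∂(μs j)) ≠
        (∫ x, g x ∂(μs j)) * (∫ x, (g x) ^ 2 ∂(μs i))) :
    ∑ i, w i *
        ((∫ x, (g x) ^ 2 ∂(μs i) - (∫ x, g x ∂(μs i)) ^ 2) /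
          ((∫ x, (g x) ^ 2 ∂(μs i) - (∫ x, g x ∂(μs i)) ^ 2) + (∫ x, g x ∂(μs i)) ^ 2)) <
      (∫ x, (g x) ^ 2 ∂μ - (∫ x, g x ∂μ) ^ 2) /
        ((∫ x, (g x) ^ 2 ∂μ - (∫ x, g x ∂μ) ^ 2) + (∫ x, g x ∂μ) ^ 2) :=
  mixture_cantelli_strict_general d n μs hprob w hw hsum μ hμ g hg2 hs hne
end
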